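/- Let F be a d-dimensional cellular automaton on a finite nonempty alphabet A, and let F↑ be its canonical lift to dimension d+1, the map on A^{ℤ^{d+1}} (identifying ℤ^{d+1} with ℤ^d × ℤ) defined by F↑(x)(z,k) = F(x(·,k))(z), i.e., F applied separately to each slice x(·,k) : ℤ^d → A. Then F is sensitive to initial conditions if and only if F↑ is sensitive to initial conditions. -/

import Mathlib

open Function

/-- Configuration space: `d`-dimensional configurations over alphabet `A`. -/
abbrev Config (d : ℕ) (A : Type*) := (Fin d → ℤ) → A

/-- Sup norm of a lattice point. -/
def normInf {d : ℕ} (i : Fin d → ℤ) : ℕ := Finset.univ.sup fun k => (i k).natAbs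

open Classical in
noncomputable def distC {d : ℕ} {A : Type*} (x y : Config d A) : ℝ :=
  if x = y then 0
  else (2 : ℝ) ^ (-((sInf {n : ℕ | ∃ i, normInf i = n ∧ x i ≠ y i} : ℕ) : ℤ))

/-- The shift by `v`. -/
def shiftCA {d : ℕ} {A : Type*} (v : Fin d → ℤ) (x : Config d A) : Config d A :=
  fun z => x (z + v)

/-- `F` is a cellular automaton: continuous (w.r.t. the Cantor metric) and shift-commuting. -/
def IsCA {d : ℕ} {A : Type*} (F : Config d A → Config d A) : Prop :=
  (∀ x : Config d A, ∀ ε > (0:ℝ), ∃ δ > (0:ℝ), ∀ y, distC x y < δ → distC (F x) (F y) < ε) ∧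
  (∀ (v : Fin d → ℤ) (x : Config d A), F (shiftCA v x) = shiftCA v (F x))

/-- `x` is an equicontinuous point of `F`. -/
def IsEquiPoint {d : ℕ} {A : Type*} (F : Config d A → Config d A) (x : Config d A) : Prop :=
  ∀ ε > (0:ℝ), ∃ δ > (0:ℝ), ∀ y, distC x y < δ → ∀ t : ℕ, distC (F^[t] x) (F^[t] y) < ε

/-- `F` is sensitive to initial conditions. -/
def Sensitive {d : ℕ} {A : Type*} (F : Config d A → Config d A) : Prop :=
  ∃ ε > (0:ℝ), ∀ x : Config d A, ∀ δ > (0:ℝ),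
    ∃ y, ∃ t : ℕ, distC x y < δ ∧ distC (F^[t] x) (F^[t] y) > ε

/-- `ε` is a sensitivity constant for `F`. -/
def IsSensConst {d : ℕ} {A : Type*} (F : Config d A → Config d A) (ε : ℝ) : Prop :=
  ∀ x : Config d A, ∀ δ > (0:ℝ),
    ∃ y, ∃ t : ℕ, distC x y < δ ∧ distC (F^[t] x) (F^[t] y) ≥ ε

/-- Canonical lift of a `d`-dimensional CA to dimension `d+1`:
`F` is applied separately to each slice (last coordinate fixed). -/
def liftCA {d : ℕ} {A : Type*} (F : Config d A → Config d A) :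
    Config (d+1) A → Config (d+1) A :=
  fun x z => F (fun w => x (Fin.snoc w (z (Fin.last d)))) (fun k => z k.castSucc)

/-- The tile set `(T,H,V)` tiles the plane. -/
def TilesPlane {T : Type*} (H V : Set (T × T)) : Prop :=
  ∃ c : ℤ × ℤ → T, ∀ z : ℤ × ℤ, (c z, c (z + (1,0))) ∈ H ∧ (c z, c (z + (0,1))) ∈ V

/-- The tile set `(T,H,V)` admits a valid tiling of the `m × m` square. -/
def TilesSquare {T : Type*} (H V : Set (T × T)) (m : ℕ) : Prop :=
  ∃ c : ℕ → ℕ → T,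
    (∀ i j, i + 1 < m → j < m → (c i j, c (i+1) j) ∈ H) ∧
    (∀ i j, i < m → j + 1 < m → (c i j, c i (j+1)) ∈ V)

/-- Local rules of `d`-dimensional CA with `n+1` states and radius `r`. -/
abbrev LocalRule (d n r : ℕ) := ((Fin d → Fin (2*r+1)) → Fin (n+1)) → Fin (n+1)

/-- Codes of `d`-dimensional cellular automata: number of states, radius, local rule. -/
abbrev CACode (d : ℕ) := Σ n : ℕ, Σ r : ℕ, LocalRule d n r

/-- An upper bound for the number of local rules. -/
abbrev ruleBound (d n r : ℕ) : ℕ := (n+1) ^ ((n+1) ^ ((2*r+1) ^ d))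

/-- Local rules are in bijection with `Fin (ruleBound d n r)`. -/
def ruleEquiv (d n r : ℕ) : LocalRule d n r ≃ Fin (ruleBound d n r) :=
  (Equiv.arrowCongr
      ((Equiv.arrowCongr finFunctionFinEquiv (Equiv.refl (Fin (n+1)))).trans finFunctionFinEquiv)
      (Equiv.refl (Fin (n+1)))).trans finFunctionFinEquiv

theorem primrec_ruleBound (d : ℕ) :
    Primrec fun t : ℕ × ℕ × ℕ => ruleBound d t.1 t.2.1 := by
  have hpow : Primrec₂ (fun a b : ℕ => a ^ b) := Primrec₂.unpaired'.mp Nat.Primrec.pow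
  have h1 : Primrec fun t : ℕ × ℕ × ℕ => t.1 + 1 := Primrec.succ.comp Primrec.fst
  have h2 : Primrec fun t : ℕ × ℕ × ℕ => (2 * t.2.1 + 1) ^ d :=
    hpow.comp (Primrec.succ.comp
      (Primrec.nat_mul.comp (Primrec.const 2) (Primrec.fst.comp Primrec.snd)))
      (Primrec.const d)
  have h3 : Primrec fun t : ℕ × ℕ × ℕ => (t.1 + 1) ^ ((2 * t.2.1 + 1) ^ d) := hpow.comp h1 h2
  exact hpow.comp h1 h3

theorem primrec_valid (d : ℕ) :
    PrimrecPred fun t : ℕ × ℕ × ℕ => t.2.2 < ruleBound d t.1 t.2.1 :=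
  Primrec.nat_lt.comp (Primrec.snd.comp Primrec.snd) (primrec_ruleBound d)

instance validCodePrimcodable (d : ℕ) :
    Primcodable {t : ℕ × ℕ × ℕ // t.2.2 < ruleBound d t.1 t.2.1} :=
  Primcodable.subtype (primrec_valid d)

/-- CA codes, encoded as triples of natural numbers. -/
def codeEquiv (d : ℕ) : CACode d ≃ {t : ℕ × ℕ × ℕ // t.2.2 < ruleBound d t.1 t.2.1} where
  toFun c := ⟨(c.1, c.2.1, (ruleEquiv d c.1 c.2.1 c.2.2).val), (ruleEquiv d c.1 c.2.1 c.2.2).isLt⟩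
  invFun t := ⟨t.1.1, t.1.2.1, (ruleEquiv d t.1.1 t.1.2.1).symm ⟨t.1.2.2, t.2⟩⟩
  left_inv c := by rcases c with ⟨n, r, f⟩; simp
  right_inv t := by rcases t with ⟨⟨n, r, k⟩, h⟩; simp

instance CACodePrimcodable (d : ℕ) : Primcodable (CACode d) :=
  Primcodable.ofEquiv _ (codeEquiv d)

/-- The global CA induced by a code. -/
def codeCA (d : ℕ) (c : CACode d) :
    Config d (Fin (c.1 + 1)) → Config d (Fin (c.1 + 1)) :=
  fun x z => c.2.2 (fun u => x (fun k => z k + ((u k : ℕ) : ℤ) - ((c.2.1 : ℕ) : ℤ)))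

/-!
Sensitivity is a purely combinatorial property: `F` is sensitive iff there is a radius `n` such
that every configuration can be perturbed outside any prescribed central box so that some
iterate changes the central box of radius `n`. The lift acts slice by slice, and the central box
of radius `n` in dimension `d + 1` is the union of the central boxes of the slices with index
`|k| ≤ n`. To lift sensitivity, perturb only slice `0`. Conversely, extend a configuration
constantly along the new coordinate, let sensitivity of the lift perturb it outside a box of
radius at least `n`, and read off the perturbation on the slice where the iterates disagree.
-/

variable {d : ℕ} {A : Type*}

def centralBox (d n : ℕ) : Set (Fin d → ℤ) := {i | normInf i ≤ n}

lemma centralBox_mono {m n : ℕ} (h : m ≤ n) : centralBox d m ⊆ centralBox d n :=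
  fun _ hi => le_trans hi h

lemma normInf_snoc (w : Fin d → ℤ) (k : ℤ) :
    normInf (Fin.snoc w k : Fin (d + 1) → ℤ) = max (normInf w) k.natAbs := by
  simp [normInf, Fin.univ_castSuccEmb, Finset.sup_map, Function.comp_def, max_comm]

lemma distC_lt_two_zpow_iff {x y : Config d A} {n : ℕ} :
    distC x y < (2 : ℝ) ^ (-(n : ℤ)) ↔ Set.EqOn x y (centralBox d n) := by
  unfold distC
  split_ifs with hxy
  · simp [hxy, Set.eqOn_refl]
  · have hne : {n : ℕ | ∃ i, normInf i = n ∧ x i ≠ y i}.Nonempty := by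
      obtain ⟨i, hi⟩ := Function.ne_iff.mp hxy
      exact ⟨_, i, rfl, hi⟩
    rw [zpow_lt_zpow_iff_right₀ one_lt_two, neg_lt_neg_iff, Nat.cast_lt, Nat.lt_iff_add_one_le,
      le_csInf_iff' hne]
    simp only [lowerBounds, centralBox, Set.EqOn, Set.mem_ofPred_eq, forall_exists_index, and_imp]
    constructor
    · intro h i hi
      by_contra hne
      have := h i rfl hne
      omega
    · rintro h _ i rfl hi
      by_contra hle
      exact hi (h (by omega))

lemma exists_two_zpow_neg_lt {ε : ℝ} (hε : 0 < ε) : ∃ n : ℕ, (2 : ℝ) ^ (-(n : ℤ)) < ε := by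
  obtain ⟨n, hn⟩ := exists_pow_lt_of_lt_one hε (by norm_num : (2⁻¹ : ℝ) < 1)
  exact ⟨n, by simpa [zpow_neg, inv_pow] using hn⟩

def IsSensRadius (F : Config d A → Config d A) (n : ℕ) : Prop :=
  ∀ x : Config d A, ∀ m : ℕ, ∃ y, ∃ t : ℕ,
    Set.EqOn x y (centralBox d m) ∧ ¬ Set.EqOn (F^[t] x) (F^[t] y) (centralBox d n)

lemma sensitive_iff_exists_isSensRadius (F : Config d A → Config d A) :
    Sensitive F ↔ ∃ n, IsSensRadius F n := by
  constructor
  · rintro ⟨ε, hε, hF⟩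
    obtain ⟨n, hn⟩ := exists_two_zpow_neg_lt hε
    refine ⟨n, fun x m => ?_⟩
    obtain ⟨y, t, hxy, hFxy⟩ := hF x _ (zpow_pos two_pos (-(m : ℤ)))
    exact ⟨y, t, distC_lt_two_zpow_iff.mp hxy,
      fun h => (distC_lt_two_zpow_iff.mpr h).not_gt (hn.trans hFxy)⟩
  · rintro ⟨n, hF⟩
    refine ⟨2 ^ (-(n + 1 : ℤ)), zpow_pos two_pos _, fun x δ hδ => ?_⟩
    obtain ⟨m, hm⟩ := exists_two_zpow_neg_lt hδ
    obtain ⟨y, t, hxy, hFxy⟩ := hF x m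
    refine ⟨y, t, (distC_lt_two_zpow_iff.mpr hxy).trans hm, ?_⟩
    calc (2 : ℝ) ^ (-(n + 1 : ℤ)) < 2 ^ (-(n : ℤ)) := by gcongr <;> norm_num
      _ ≤ distC (F^[t] x) (F^[t] y) := not_lt.mp (mt distC_lt_two_zpow_iff.mp hFxy)

def slices (x : Config (d + 1) A) (k : ℤ) : Config d A := fun w => x (Fin.snoc w k)

def ofSlices (f : ℤ → Config d A) : Config (d + 1) A := fun z => f (z (Fin.last d)) (Fin.init z)

@[simp]
lemma slices_ofSlices (f : ℤ → Config d A) : slices (ofSlices f) = f := by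
  funext k w
  simp [slices, ofSlices]

lemma slices_iterate_liftCA (F : Config d A → Config d A) (t : ℕ) (x : Config (d + 1) A)
    (k : ℤ) : slices ((liftCA F)^[t] x) k = F^[t] (slices x k) :=
  Semiconj.iterate_right (f := fun x => slices x k) (fun _ => by
    funext w; simp only [slices, liftCA, Fin.snoc_castSucc, Fin.snoc_last]; rfl) t x

lemma eqOn_centralBox_succ_iff {x y : Config (d + 1) A} {n : ℕ} :
    Set.EqOn x y (centralBox (d + 1) n) ↔
      ∀ k : ℤ, k.natAbs ≤ n → Set.EqOn (slices x k) (slices y k) (centralBox d n) := by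
  constructor
  · intro h k hk w hw
    exact h (by simp only [centralBox, Set.mem_ofPred_eq, normInf_snoc, max_le_iff] at hw ⊢
                exact ⟨hw, hk⟩)
  · intro h z hz
    obtain ⟨w, k, rfl⟩ : ∃ w k, z = Fin.snoc w k := ⟨_, _, (Fin.snoc_init_self z).symm⟩
    simp only [centralBox, Set.mem_ofPred_eq, normInf_snoc, max_le_iff] at hz
    exact h k hz.2 hz.1

lemma IsSensRadius.lift {F : Config d A → Config d A} {n : ℕ} (hF : IsSensRadius F n) :
    IsSensRadius (liftCA F) n := by
  intro x m
  obtain ⟨s, t, hxs, hFs⟩ := hF (slices x 0) m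
  refine ⟨ofSlices (update (slices x) 0 s), t, ?_, ?_⟩
  · refine eqOn_centralBox_succ_iff.mpr fun k _ => ?_
    rcases eq_or_ne k 0 with rfl | hk
    · simpa using hxs
    · simp [hk, Set.eqOn_refl]
  · rw [eqOn_centralBox_succ_iff]
    exact fun h => hFs (by simpa [slices_iterate_liftCA] using h 0 (by simp))

lemma IsSensRadius.of_lift {F : Config d A → Config d A} {n : ℕ}
    (hF : IsSensRadius (liftCA F) n) : IsSensRadius F n := by
  intro x m
  obtain ⟨y, t, hxy, hFxy⟩ := hF (ofSlices fun _ => x) (max m n)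
  rw [eqOn_centralBox_succ_iff] at hxy hFxy
  push Not at hFxy
  obtain ⟨k, hk, hFk⟩ := hFxy
  refine ⟨slices y k, t, ?_, by simpa [slices_iterate_liftCA] using hFk⟩
  simpa using (hxy k (hk.trans (le_max_right m n))).mono (centralBox_mono (le_max_left m n))

theorem lift_sensitive_iff_general
    {d : ℕ} (A : Type)
    (F : Config d A → Config d A) :
    Sensitive F ↔ Sensitive (liftCA F) := by
  simp only [sensitive_iff_exists_isSensRadius]
  exact ⟨fun ⟨n, h⟩ => ⟨n, h.lift⟩, fun ⟨n, h⟩ => ⟨n, h.of_lift⟩⟩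

/-- a `d`-dimensional CA is sensitive to initial conditions iff its
canonical lift to dimension `d+1` is sensitive to initial conditions. -/
theorem lift_sensitive_iff
    {d : ℕ} (hd : 1 ≤ d) (A : Type) [Fintype A] [Nonempty A]
    (F : Config d A → Config d A) (hF : IsCA F) :
    Sensitive F ↔ Sensitive (liftCA F) :=
  lift_sensitive_iff_general A F
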